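/- Let C be a ∘-coalgebra and (V, ⟨·,·⟩) a unitary right C-comodule. If W ⊆ V is a subcomodule, then the orthogonal complement W⊥ is also a subcomodule of V. Hence every unitary C-comodule is completely reducible. -/

import Mathlib

/-!
Fix a basis `b` of `C` and write `ρ v = Σ vₙ ⊗ b n`; a subspace is a subcomodule iff it is stable
under all coefficient maps `v ↦ vₙ`. If `v ⊥ W` and `w ∈ W`, unitarity reads
`Σ ⟨vₙ, w⟩ b n = Σ ⟨v, wₘ⟩ (b m)∘ = 0`, so every `vₙ ⊥ W` and `W⊥` is a subcomodule.

For complete reducibility take, by Zorn, a subcomodule `W'` maximal with `W ∩ W' = 0`. If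
`M = W + W'` were proper, pick `v ∉ M`; by coassociativity and counitality the coefficients `vₙ`
span a finite-dimensional subcomodule `U ∋ v`. For the finite-dimensional `K = U ∩ M` we have
`U = K ⊕ (K⊥ ∩ U)`, so `K⊥ ∩ U` is a nonzero subcomodule meeting `M` trivially, and by modularity
`W' + (K⊥ ∩ U)` still meets `W` trivially, contradicting maximality.
-/

open TensorProduct Coalgebra

variable {C : Type*} [AddCommGroup C] [Module ℂ C] [Coalgebra ℂ C]
variable {V : Type*} [AddCommGroup V] [Module ℂ V]

/-- A right `C`-comodule structure on `V`. -/
structure CoactionOn (C : Type*) [AddCommGroup C] [Module ℂ C] [Coalgebra ℂ C]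
    (V : Type*) [AddCommGroup V] [Module ℂ V] where
  ρ : V →ₗ[ℂ] V ⊗[ℂ] C
  counit_id : ∀ v : V,
    TensorProduct.rid ℂ V (LinearMap.lTensor V (Coalgebra.counit (R := ℂ)) (ρ v)) = v
  coassoc : ∀ v : V, LinearMap.rTensor C ρ (ρ v) =
    (TensorProduct.assoc ℂ V C C).symm
      (LinearMap.lTensor V (Coalgebra.comul (R := ℂ)) (ρ v))

/-- `W` is a subcomodule: `ρ(W) ⊆ W ⊗ C`. -/
def IsSubcomodule (co : CoactionOn C V) (W : Submodule ℂ V) : Prop :=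
  ∀ x ∈ W, co.ρ x ∈ LinearMap.range (LinearMap.rTensor C W.subtype)

/-- `β` is a unitary form: `Σ β(u₀, v) u₁ = Σ β(u, v₀) v₁∘` (in Sweedler notation). -/
def IsUnitaryForm (circ : C → C) (co : CoactionOn C V) (β : V → V → ℂ) : Prop :=
  ∀ (u v : V) (ι₁ : Type) (s₁ : Finset ι₁) (e₁ : ι₁ → V) (c₁ : ι₁ → C),
    co.ρ u = ∑ i ∈ s₁, e₁ i ⊗ₜ[ℂ] c₁ i →
    ∀ (ι₂ : Type) (s₂ : Finset ι₂) (e₂ : ι₂ → V) (c₂ : ι₂ → C),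
      co.ρ v = ∑ j ∈ s₂, e₂ j ⊗ₜ[ℂ] c₂ j →
      ∑ i ∈ s₁, β (e₁ i) v • c₁ i = ∑ j ∈ s₂, β u (e₂ j) • circ (c₂ j)

theorem Finset.sum_eq_sum_fin_equivFin {ι M : Type*} [AddCommMonoid M] (s : Finset ι)
    (f : ι → M) : ∑ i ∈ s, f i = ∑ k : Fin s.card, f (s.equivFin.symm k) :=
  (Finset.sum_coe_sort s f).symm.trans (Equiv.sum_comp s.equivFin.symm fun i : s => f i).symm

namespace Module.Basis

variable {R ι M N P : Type*} [CommRing R] [AddCommGroup M] [Module R M] [AddCommGroup N]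
  [Module R N] [AddCommGroup P] [Module R P] (b : Basis ι R N)

noncomputable def tensorCoord (M : Type*) [AddCommGroup M] [Module R M] (n : ι) :
    M ⊗[R] N →ₗ[R] M :=
  TensorProduct.rid R M ∘ₗ (b.coord n).lTensor M

@[simp]
theorem tensorCoord_tmul (n : ι) (m : M) (c : N) :
    b.tensorCoord M n (m ⊗ₜ c) = b.repr c n • m := by
  simp [tensorCoord]

theorem tensorCoord_apply [DecidableEq ι] (n : ι) (x : M ⊗[R] N) :
    b.tensorCoord M n x = equivFinsuppOfBasisRight b x n :=
  (equivFinsuppOfBasisRight_apply b x n).symm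

theorem sum_tensorCoord_tmul [DecidableEq ι] {x : M ⊗[R] N} {s : Finset ι}
    (hs : (equivFinsuppOfBasisRight b x).support ⊆ s) :
    ∑ n ∈ s, b.tensorCoord M n x ⊗ₜ b n = x := by
  conv_rhs => rw [← (equivFinsuppOfBasisRight b).symm_apply_apply x]
  rw [equivFinsuppOfBasisRight_symm_apply, Finsupp.sum_of_support_subset _ hs _ (by simp)]
  simp only [tensorCoord_apply]

theorem tensorCoord_rTensor (f : M →ₗ[R] P) (n : ι) (y : M ⊗[R] N) :
    b.tensorCoord P n (f.rTensor N y) = f (b.tensorCoord M n y) := by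
  induction y using TensorProduct.induction_on with
  | zero => simp
  | tmul m c => simp
  | add x y hx hy => simp [hx, hy]

theorem tensorCoord_assoc_symm (n : ι) (x : M ⊗[R] (P ⊗[R] N)) :
    b.tensorCoord (M ⊗[R] P) n ((TensorProduct.assoc R M P N).symm x) =
      (b.tensorCoord P n).lTensor M x := by
  induction x using TensorProduct.induction_on with
  | zero => simp
  | tmul m y =>
    induction y using TensorProduct.induction_on with
    | zero => simp
    | tmul p c => simp [TensorProduct.tmul_smul]
    | add y z hy hz => simp [TensorProduct.tmul_add, hy, hz]
  | add x y hx hy => simp [hx, hy]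

theorem mem_range_rTensor_subtype_iff (W : Submodule R M) (x : M ⊗[R] N) :
    x ∈ LinearMap.range (W.subtype.rTensor N) ↔ ∀ n, b.tensorCoord M n x ∈ W := by
  classical
  refine ⟨?_, fun h => ?_⟩
  · rintro ⟨y, rfl⟩ n
    rw [tensorCoord_rTensor]
    exact (b.tensorCoord W n y).2
  · rw [← b.sum_tensorCoord_tmul (x := x) subset_rfl]
    exact Submodule.sum_mem _ fun n _ => ⟨⟨_, h n⟩ ⊗ₜ b n, rfl⟩

end Module.Basis

open Module

section Subcomodule

variable (co : CoactionOn C V)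

theorem isSubcomodule_iff {ι : Type*} (b : Basis ι ℂ C) {W : Submodule ℂ V} :
    IsSubcomodule co W ↔ ∀ x ∈ W, ∀ n, b.tensorCoord V n (co.ρ x) ∈ W :=
  forall₂_congr fun x _ => b.mem_range_rTensor_subtype_iff W (co.ρ x)

theorem isSubcomodule_bot : IsSubcomodule co ⊥ := by
  intro x hx
  rw [(Submodule.mem_bot ℂ).1 hx, map_zero]
  exact zero_mem _

variable {co}

theorem IsSubcomodule.inf {W₁ W₂ : Submodule ℂ V} (h₁ : IsSubcomodule co W₁)
    (h₂ : IsSubcomodule co W₂) : IsSubcomodule co (W₁ ⊓ W₂) := by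
  rw [isSubcomodule_iff co (Basis.ofVectorSpace ℂ C)] at h₁ h₂ ⊢
  exact fun x hx n => ⟨h₁ x hx.1 n, h₂ x hx.2 n⟩

theorem IsSubcomodule.sup {W₁ W₂ : Submodule ℂ V} (h₁ : IsSubcomodule co W₁)
    (h₂ : IsSubcomodule co W₂) : IsSubcomodule co (W₁ ⊔ W₂) := by
  rw [isSubcomodule_iff co (Basis.ofVectorSpace ℂ C)] at h₁ h₂ ⊢
  intro x hx n
  obtain ⟨y, hy, z, hz, rfl⟩ := Submodule.mem_sup.1 hx
  rw [map_add, map_add]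
  exact add_mem (Submodule.mem_sup_left (h₁ y hy n)) (Submodule.mem_sup_right (h₂ z hz n))

theorem isSubcomodule_sSup_of_directedOn {S : Set (Submodule ℂ V)}
    (hS : DirectedOn (· ≤ ·) S) (h : ∀ W ∈ S, IsSubcomodule co W) :
    IsSubcomodule co (sSup S) := by
  rcases S.eq_empty_or_nonempty with rfl | hne
  · simpa using isSubcomodule_bot co
  simp only [isSubcomodule_iff co (Basis.ofVectorSpace ℂ C)] at h ⊢
  intro x hx n
  obtain ⟨W, hWS, hxW⟩ := (Submodule.mem_sSup_of_directed hne hS).1 hx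
  exact le_sSup hWS (h W hWS x hxW n)

theorem exists_isSubcomodule_isCompl
    (h : ∀ M, IsSubcomodule co M → M ≠ ⊤ → ∃ P, IsSubcomodule co P ∧ P ≠ ⊥ ∧ Disjoint M P)
    {W : Submodule ℂ V} (hW : IsSubcomodule co W) :
    ∃ W', IsSubcomodule co W' ∧ IsCompl W W' := by
  obtain ⟨W', hW'⟩ := zorn_le₀ {W' | IsSubcomodule co W' ∧ Disjoint W W'}
    fun c hc hchain => ⟨sSup c,
      ⟨isSubcomodule_sSup_of_directedOn hchain.directedOn fun _ h => (hc h).1,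
        hchain.directedOn.disjoint_sSup_right.2 fun _ h => (hc h).2⟩,
      fun _ => le_sSup⟩
  refine ⟨W', hW'.prop.1, hW'.prop.2, codisjoint_iff.2 ?_⟩
  by_contra hne
  obtain ⟨P, hP, hP0, hdisj⟩ := h _ (hW.sup hW'.prop.1) hne
  have hle : W' ⊔ P ≤ W' :=
    hW'.2 ⟨hW'.prop.1.sup hP, hW'.prop.2.disjoint_sup_right_of_disjoint_sup_left hdisj⟩
      le_sup_left
  exact hP0 (hdisj.eq_bot_of_ge ((le_sup_right.trans hle).trans le_sup_right))

end Subcomodule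

namespace CoactionOn

variable (co : CoactionOn C V) {ι : Type*} [DecidableEq ι] (b : Basis ι ℂ C) {v : V}
  {s : Finset ι}

theorem sum_counit_smul_tensorCoord (hs : (equivFinsuppOfBasisRight b (co.ρ v)).support ⊆ s) :
    ∑ n ∈ s, Coalgebra.counit (R := ℂ) (b n) • b.tensorCoord V n (co.ρ v) = v := by
  conv_rhs => rw [← co.counit_id v, ← b.sum_tensorCoord_tmul hs]
  simp

theorem ρ_tensorCoord (hs : (equivFinsuppOfBasisRight b (co.ρ v)).support ⊆ s) (n : ι) :
    co.ρ (b.tensorCoord V n (co.ρ v)) =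
      ∑ m ∈ s, b.tensorCoord V m (co.ρ v) ⊗ₜ b.tensorCoord C n (Coalgebra.comul (b m)) := by
  calc co.ρ (b.tensorCoord V n (co.ρ v))
      = b.tensorCoord (V ⊗[ℂ] C) n (co.ρ.rTensor C (co.ρ v)) := (b.tensorCoord_rTensor _ _ _).symm
    _ = (b.tensorCoord C n).lTensor V (Coalgebra.comul.lTensor V (co.ρ v)) := by
      rw [co.coassoc, b.tensorCoord_assoc_symm]
    _ = _ := by
      conv_lhs => rw [← b.sum_tensorCoord_tmul hs]
      simp

theorem exists_finiteDimensional_isSubcomodule_mem (v : V) :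
    ∃ U : Submodule ℂ V, FiniteDimensional ℂ U ∧ IsSubcomodule co U ∧ v ∈ U := by
  classical
  let b := Basis.ofVectorSpace ℂ C
  let s := (equivFinsuppOfBasisRight b (co.ρ v)).support
  let U := Submodule.span ℂ ((fun n => b.tensorCoord V n (co.ρ v)) '' s)
  have hmem : ∀ n ∈ s, b.tensorCoord V n (co.ρ v) ∈ U := fun n hn =>
    Submodule.subset_span ⟨n, hn, rfl⟩
  refine ⟨U, FiniteDimensional.span_of_finite ℂ (s.finite_toSet.image _), ?_, ?_⟩
  · suffices U ≤ (LinearMap.range (U.subtype.rTensor C)).comap co.ρ from fun x hx => this hx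
    rw [Submodule.span_le]
    rintro _ ⟨n, -, rfl⟩
    rw [SetLike.mem_coe, Submodule.mem_comap, co.ρ_tensorCoord b subset_rfl]
    exact Submodule.sum_mem _ fun m hm => ⟨⟨_, hmem m hm⟩ ⊗ₜ _, rfl⟩
  · rw [← co.sum_counit_smul_tensorCoord b (v := v) subset_rfl]
    exact Submodule.sum_mem _ fun n hn => Submodule.smul_mem _ _ (hmem n hn)

end CoactionOn

namespace IsUnitaryForm

variable {circ : C → C} {co : CoactionOn C V} {β : V → V → ℂ}

theorem sum_smul_eq {ι₁ ι₂ : Type*} (hβ : IsUnitaryForm circ co β) {u v : V}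
    {s₁ : Finset ι₁} {e₁ : ι₁ → V} {c₁ : ι₁ → C} (hu : co.ρ u = ∑ i ∈ s₁, e₁ i ⊗ₜ c₁ i)
    {s₂ : Finset ι₂} {e₂ : ι₂ → V} {c₂ : ι₂ → C} (hv : co.ρ v = ∑ j ∈ s₂, e₂ j ⊗ₜ c₂ j) :
    ∑ i ∈ s₁, β (e₁ i) v • c₁ i = ∑ j ∈ s₂, β u (e₂ j) • circ (c₂ j) := by
  -- `IsUnitaryForm` only quantifies over index types in `Type`, hence the reindexing by `Fin`
  rw [Finset.sum_eq_sum_fin_equivFin] at hu hv ⊢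
  rw [Finset.sum_eq_sum_fin_equivFin s₂]
  exact hβ u v _ Finset.univ _ _ hu _ Finset.univ _ _ hv

theorem isSubcomodule_of_forall_mem_iff (hβ : IsUnitaryForm circ co β)
    {W Wp : Submodule ℂ V} (hW : IsSubcomodule co W)
    (hWp : ∀ v, v ∈ Wp ↔ ∀ w ∈ W, β v w = 0) : IsSubcomodule co Wp := by
  classical
  let b := Basis.ofVectorSpace ℂ C
  rw [isSubcomodule_iff co b] at hW ⊢
  intro v hv n
  rw [hWp] at hv ⊢
  intro w hw
  let s := insert n (equivFinsuppOfBasisRight b (co.ρ v)).support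
  -- the coefficients of `ρ w` lie in `W`, so the right-hand side of unitarity vanishes
  have hsum : ∑ m ∈ s, β (b.tensorCoord V m (co.ρ v)) w • b m = 0 := by
    rw [hβ.sum_smul_eq (b.sum_tensorCoord_tmul (Finset.subset_insert _ _)).symm
      (b.sum_tensorCoord_tmul subset_rfl).symm]
    exact Finset.sum_eq_zero fun m _ => by rw [hv _ (hW w hw m), zero_smul]
  exact linearIndependent_iff'.1 b.linearIndependent s _ hsum n (Finset.mem_insert_self n _)

end IsUnitaryForm

theorem exists_isSubcomodule_ne_bot_disjoint {E : Type*} [NormedAddCommGroup E]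
    [InnerProductSpace ℂ E] {co : CoactionOn C E}
    (hperp : ∀ K, IsSubcomodule co K → IsSubcomodule co Kᗮ)
    {M : Submodule ℂ E} (hM : IsSubcomodule co M) (hMtop : M ≠ ⊤) :
    ∃ P, IsSubcomodule co P ∧ P ≠ ⊥ ∧ Disjoint M P := by
  obtain ⟨v, hv⟩ := SetLike.exists_not_mem_of_ne_top M hMtop
  obtain ⟨U, hUfin, hU, hvU⟩ := co.exists_finiteDimensional_isSubcomodule_mem v
  let K := U ⊓ M
  have : FiniteDimensional ℂ K := Submodule.finiteDimensional_of_le inf_le_left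
  refine ⟨Kᗮ ⊓ U, (hperp K (hU.inf hM)).inf hU, fun hP => hv ?_, ?_⟩
  · have hUK : U = K ⊔ Kᗮ ⊓ U := by
      rw [← sup_inf_assoc_of_le _ inf_le_left, K.sup_orthogonal_of_hasOrthogonalProjection,
        top_inf_eq]
    rw [hP, sup_bot_eq] at hUK
    exact (Submodule.mem_inf.1 (hUK ▸ hvU : v ∈ K)).2
  · rw [disjoint_iff, inf_comm Kᗮ, ← inf_assoc, inf_comm M]
    exact K.inf_orthogonal_eq_bot

noncomputable abbrev innerProductCoreOfForm (β : V → V → ℂ)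
    (hadd : ∀ u u' v : V, β (u + u') v = β u v + β u' v)
    (hsmul : ∀ (a : ℂ) (u v : V), β (a • u) v = a * β u v)
    (hherm : ∀ u v : V, β v u = (starRingEnd ℂ) (β u v))
    (hpos : ∀ v : V, v ≠ 0 → 0 < (β v v).re ∧ (β v v).im = 0) :
    InnerProductSpace.Core ℂ V where
  -- Mathlib's inner product is conjugate-linear in its first argument
  inner x y := β y x
  conj_inner_symm x y := (hherm x y).symm
  re_inner_nonneg x := by
    rcases eq_or_ne x 0 with rfl | hx
    · have : β 0 0 = 0 := by simpa using hsmul 0 0 0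
      simp [this]
    · exact (hpos x hx).1.le
  add_left x y z := by
    simp only [hherm (x + y), hadd, map_add, ← hherm]
  smul_left x y r := by
    simp only [hherm (r • x), hsmul, map_mul, ← hherm]
  definite x hx := by
    by_contra hne
    simpa [hx] using (hpos x hne).1

theorem orthogonal_complement_subcomodule_general
    (circ : C → C)
    (co : CoactionOn C V) (β : V → V → ℂ)
    (hβadd₁ : ∀ u u' v : V, β (u + u') v = β u v + β u' v)
    (hβsmul₁ : ∀ (a : ℂ) (u v : V), β (a • u) v = a * β u v)
    (hβherm : ∀ u v : V, β v u = (starRingEnd ℂ) (β u v))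
    (hβpos : ∀ v : V, v ≠ 0 → 0 < (β v v).re ∧ (β v v).im = 0)
    (hβunit : IsUnitaryForm circ co β) :
    (∀ W : Submodule ℂ V, IsSubcomodule co W →
      ∃ Wp : Submodule ℂ V, (∀ v : V, v ∈ Wp ↔ ∀ w ∈ W, β v w = 0) ∧
        IsSubcomodule co Wp) ∧
    (∀ W : Submodule ℂ V, IsSubcomodule co W →
      ∃ W' : Submodule ℂ V, IsSubcomodule co W' ∧ W ⊓ W' = ⊥ ∧ W ⊔ W' = ⊤) := by
  let core := innerProductCoreOfForm β hβadd₁ hβsmul₁ hβherm hβpos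
  let _ : NormedAddCommGroup V := core.toNormedAddCommGroup
  let _ : InnerProductSpace ℂ V := .ofCore core.toCore
  have hperp (W : Submodule ℂ V) (v : V) : v ∈ Wᗮ ↔ ∀ w ∈ W, β v w = 0 :=
    Submodule.mem_orthogonal W v
  have hsub (W : Submodule ℂ V) (hW : IsSubcomodule co W) : IsSubcomodule co Wᗮ :=
    hβunit.isSubcomodule_of_forall_mem_iff hW (hperp W)
  refine ⟨fun W hW => ⟨Wᗮ, hperp W, hsub W hW⟩, fun W hW => ?_⟩
  obtain ⟨W', hW', hcompl⟩ := exists_isSubcomodule_isCompl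
    (fun M hM hMtop => exists_isSubcomodule_ne_bot_disjoint hsub hM hMtop) hW
  exact ⟨W', hW', hcompl.inf_eq_bot, hcompl.sup_eq_top⟩

/-- in a unitary comodule, the orthogonal complement of a subcomodule is a
subcomodule; hence every unitary comodule is completely reducible. -/
theorem orthogonal_complement_subcomodule
    (circ : C → C)
    (hcadd : ∀ x y : C, circ (x + y) = circ x + circ y)
    (hcsmul : ∀ (a : ℂ) (x : C), circ (a • x) = (starRingEnd ℂ) a • circ x)
    (hcinvol : ∀ x : C, circ (circ x) = x)
    (hcanti : ∀ (x : C) (ι : Type*) (r : Coalgebra.Repr ℂ x ι),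
      Coalgebra.comul (R := ℂ) (circ x) =
        ∑ i ∈ r.index, circ (r.right i) ⊗ₜ[ℂ] circ (r.left i))
    (co : CoactionOn C V) (β : V → V → ℂ)
    (hβadd₁ : ∀ u u' v : V, β (u + u') v = β u v + β u' v)
    (hβsmul₁ : ∀ (a : ℂ) (u v : V), β (a • u) v = a * β u v)
    (hβherm : ∀ u v : V, β v u = (starRingEnd ℂ) (β u v))
    (hβpos : ∀ v : V, v ≠ 0 → 0 < (β v v).re ∧ (β v v).im = 0)
    (hβunit : IsUnitaryForm circ co β) :
    (∀ W : Submodule ℂ V, IsSubcomodule co W →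
      ∃ Wp : Submodule ℂ V, (∀ v : V, v ∈ Wp ↔ ∀ w ∈ W, β v w = 0) ∧
        IsSubcomodule co Wp) ∧
    (∀ W : Submodule ℂ V, IsSubcomodule co W →
      ∃ W' : Submodule ℂ V, IsSubcomodule co W' ∧ W ⊓ W' = ⊥ ∧ W ⊔ W' = ⊤) :=
  orthogonal_complement_subcomodule_general circ co β hβadd₁ hβsmul₁ hβherm hβpos hβunit
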